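/- arXiv:2210.11504 — 4 statements merged into one kernel-verified Lean document; each statement's English description precedes it below -/
import Mathlib

section
/- Let ℓ1 be a divisor of R1 and let {p_1,…,p_u} be the set of all primes which divide R1 but do not divide ℓ1; let ℓ2 be a divisor of R2 and let {q_1,…,q_v} be the set of all primes which divide R2 but do not divide ℓ2. Let {P_1,…,P_s} be the set of all monic irreducible polynomials dividing x^n−1 but not dividing g1, and {Q_1,…,Q_t} the set of all monic irreducible polynomials dividing x^n−1 but not dividing g2. Then N_F(R1,R2,x^n−1,x^n−1) ≥ Σ_{i=1}^u N_F(ℓ1·p_i, ℓ2, g1, g2) + Σ_{i=1}^v N_F(ℓ1, ℓ2·q_i, g1, g2) + Σ_{i=1}^s N_F(ℓ1, ℓ2, g1·P_i, g2) + Σ_{i=1}^t N_F(ℓ1, ℓ2, g1, g2·Q_i) − (u+v+s+t−1)·N_F(ℓ1, ℓ2, g1, g2). -/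
open Polynomial
open scoped Classical

noncomputable section

/-- The `𝔽_q[x]`-module action `f ∘ α = Σᵢ aᵢ α^(qⁱ)` of a polynomial over the base field
on the extension field. -/
def polyAction (q : ℕ) {Fq K : Type*} [Field Fq] [Field K] [Algebra Fq K]
    (f : Polynomial Fq) (α : K) : K :=
  f.sum fun i a => algebraMap Fq K a * α ^ q ^ i

/-- `α` is `g`-free: no monic divisor `h ≠ 1` of `g` and `β` satisfy `α = h ∘ β`. -/
def gFree (q : ℕ) {Fq K : Type*} [Field Fq] [Field K] [Algebra Fq K]
    (g : Polynomial Fq) (α : K) : Prop :=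
  ¬∃ (h : Polynomial Fq) (β : K), h.Monic ∧ h ∣ g ∧ h ≠ 1 ∧ α = polyAction q h β

/-- `α` is `(R,r)`-free: `α` lies in the cyclic subgroup `C_r` of order `(qⁿ-1)/r` of `K*` and
whenever `α = β^s` with `β ∈ C_r` and `s ∣ R`, then `s = 1`. -/
def RrFree (q n R r : ℕ) {K : Type*} [Field K] (α : K) : Prop :=
  α ≠ 0 ∧ α ^ ((q ^ n - 1) / r) = 1 ∧
    ∀ (s : ℕ) (β : K), s ∣ R → β ^ ((q ^ n - 1) / r) = 1 → α = β ^ s → s = 1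

/-- `α` is `r`-primitive: its multiplicative order is `(qⁿ-1)/r`. -/
def rPrimitive (q n r : ℕ) {K : Type*} [Field K] (α : K) : Prop :=
  α ≠ 0 ∧ orderOf α = (q ^ n - 1) / r

/-- The polynomial `g_α(x) = α x^(n-1) + α^q x^(n-2) + ⋯ + α^(q^(n-1))`. -/
def gAlpha (q n : ℕ) {K : Type*} [Field K] (α : K) : Polynomial K :=
  ∑ i ∈ Finset.range n, C (α ^ q ^ i) * X ^ (n - 1 - i)

/-- `α` is `k`-normal over `𝔽_q`: `gcd(g_α(x), xⁿ-1)` has degree `k`. -/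
def kNormal (q n k : ℕ) {K : Type*} [Field K] (α : K) : Prop :=
  (EuclideanDomain.gcd (gAlpha q n α) (X ^ n - 1 : Polynomial K)).natDegree = k

/-- The set `Υ_Q(m₁, m₂)` of rational functions `F₁/F₂`, given by the conditions on the pair
`(F₁, F₂)`. -/
def Upsilon (Q : ℕ) {K : Type*} [Field K] (m1 m2 : ℕ) (F1 F2 : Polynomial K) : Prop :=
  F1.natDegree ≤ m1 ∧ F2.natDegree ≤ m2 ∧ F2 ≠ 0 ∧ IsCoprime F1 F2 ∧
    ∃ (m : ℕ) (g : Polynomial K), Nat.gcd m (Q - 1) = 1 ∧ g.Monic ∧ Irreducible g ∧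
      g ≠ X ∧ g ^ m ∣ F1 * F2 ∧ ¬g ^ (m + 1) ∣ F1 * F2

/-- `W(t)`: the number of squarefree positive divisors of `t`. -/
def Wnat (t : ℕ) : ℕ := (t.divisors.filter Squarefree).card

/-- `W(f)`: the number of squarefree monic divisors of the polynomial `f`. -/
def Wpoly {F : Type*} [Field F] (f : Polynomial F) : ℕ :=
  Set.ncard {g : Polynomial F | g.Monic ∧ Squarefree g ∧ g ∣ f}

/-- `N_F(R₁, R₂, g₁, g₂)`: the number of triples `(α, β₁, β₂)` with
`α ∈ K* ∖ S_F`, `α` `(R₁,r₁)`-free, `F(α)` `(R₂,r₂)`-free, `β₁` `g₁`-free, `β₂` `g₂`-free,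
`α = f₁ ∘ β₁` and `F(α) = f₂ ∘ β₂`. -/
def NFcount (q n : ℕ) {Fq K : Type*} [Field Fq] [Field K] [Algebra Fq K]
    (r1 r2 : ℕ) (f1 f2 : Polynomial Fq) (F1 F2 : Polynomial K)
    (R1 R2 : ℕ) (g1 g2 : Polynomial Fq) : ℕ :=
  Set.ncard {t : K × K × K |
    t.1 ≠ 0 ∧ F1.eval t.1 ≠ 0 ∧ F2.eval t.1 ≠ 0 ∧
    RrFree q n R1 r1 t.1 ∧ RrFree q n R2 r2 (F1.eval t.1 / F2.eval t.1) ∧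
    gFree q g1 t.2.1 ∧ gFree q g2 t.2.2 ∧
    t.1 = polyAction q f1 t.2.1 ∧ F1.eval t.1 / F2.eval t.1 = polyAction q f2 t.2.2}

end

noncomputable section SieveAux

/-- The set whose cardinality is `NFcount`. -/
def Sset (q n : ℕ) {Fq K : Type*} [Field Fq] [Field K] [Algebra Fq K]
    (r1 r2 : ℕ) (f1 f2 : Polynomial Fq) (F1 F2 : Polynomial K)
    (R1 R2 : ℕ) (g1 g2 : Polynomial Fq) : Set (K × K × K) :=
  {t : K × K × K |
    t.1 ≠ 0 ∧ F1.eval t.1 ≠ 0 ∧ F2.eval t.1 ≠ 0 ∧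
    RrFree q n R1 r1 t.1 ∧ RrFree q n R2 r2 (F1.eval t.1 / F2.eval t.1) ∧
    gFree q g1 t.2.1 ∧ gFree q g2 t.2.2 ∧
    t.1 = polyAction q f1 t.2.1 ∧ F1.eval t.1 / F2.eval t.1 = polyAction q f2 t.2.2}

lemma NFcount_eq_ncard_Sset (q n : ℕ) {Fq K : Type*} [Field Fq] [Field K] [Algebra Fq K]
    (r1 r2 : ℕ) (f1 f2 : Polynomial Fq) (F1 F2 : Polynomial K)
    (R1 R2 : ℕ) (g1 g2 : Polynomial Fq) :
    NFcount q n r1 r2 f1 f2 F1 F2 R1 R2 g1 g2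
      = (Sset q n r1 r2 f1 f2 F1 F2 R1 R2 g1 g2).ncard := rfl

/-- The counting (inclusion–exclusion style) sieve inequality. -/
lemma sieve_ncard {α : Type*} [Fintype α] {ι : Type*} (I : Finset ι) (S : Set α)
    (T : ι → Set α) :
    (∑ i ∈ I, ((S ∩ T i).ncard : ℤ)) - ((I.card : ℤ) - 1) * (S.ncard : ℤ) ≤
      ((S ∩ ⋂ i ∈ I, T i).ncard : ℤ) := by
  classical
  induction I using Finset.cons_induction with
  | empty => simp
  | cons j I' hj ih =>
      have hsplit : (S ∩ ⋂ i ∈ Finset.cons j I' hj, T i)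
          = (S ∩ ⋂ i ∈ I', T i) ∩ (S ∩ T j) := by
        rw [Finset.cons_eq_insert, Finset.set_biInter_insert]
        ext t
        simp only [Set.mem_inter_iff]
        tauto
      set A := S ∩ ⋂ i ∈ I', T i with hA
      set B := S ∩ T j with hB
      have hsub : A ∪ B ⊆ S :=
        Set.union_subset Set.inter_subset_left Set.inter_subset_left
      have h1 : (A ∪ B).ncard + (A ∩ B).ncard = A.ncard + B.ncard :=
        Set.ncard_union_add_ncard_inter A B (Set.toFinite A) (Set.toFinite B)
      have h2 : (A ∪ B).ncard ≤ S.ncard := Set.ncard_le_ncard hsub (Set.toFinite S)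
      have h1' : ((A ∪ B).ncard : ℤ) + ((A ∩ B).ncard : ℤ)
          = (A.ncard : ℤ) + (B.ncard : ℤ) := by exact_mod_cast h1
      have h2' : ((A ∪ B).ncard : ℤ) ≤ (S.ncard : ℤ) := by exact_mod_cast h2
      rw [hsplit, Finset.sum_cons, Finset.card_cons]
      push_cast
      linarith

lemma RrFree_mono {K : Type*} [Field K] {q n r ℓ R : ℕ} (hdvd : ℓ ∣ R) {α : K}
    (h : RrFree q n R r α) : RrFree q n ℓ r α :=
  ⟨h.1, h.2.1, fun s β hs hβ hαβ => h.2.2 s β (hs.trans hdvd) hβ hαβ⟩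

lemma gFree_mono {q : ℕ} {Fq K : Type*} [Field Fq] [Field K] [Algebra Fq K]
    {g G : Polynomial Fq} (hdvd : g ∣ G) {α : K} (h : gFree q G α) : gFree q g α :=
  fun ⟨h', β, hm, hd, hn, he⟩ => h ⟨h', β, hm, hd.trans hdvd, hn, he⟩

lemma RrFree_sieve {K : Type*} [Field K] {q n r R ℓ : ℕ} (hR : R ≠ 0) {α : K}
    (h0 : RrFree q n ℓ r α)
    (h : ∀ p', p'.Prime → p' ∣ R → ¬p' ∣ ℓ → RrFree q n (ℓ * p') r α) :
    RrFree q n R r α := by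
  refine ⟨h0.1, h0.2.1, fun s β hsR hβ hαβ => ?_⟩
  by_contra hs1
  have hs0 : s ≠ 0 := by
    rintro rfl
    exact hR (zero_dvd_iff.mp hsR)
  set pr := s.minFac with hpr
  have hprp : pr.Prime := Nat.minFac_prime hs1
  have hprs : pr ∣ s := Nat.minFac_dvd s
  have hβ' : (β ^ (s / pr)) ^ ((q ^ n - 1) / r) = 1 := by
    rw [← pow_mul, mul_comm, pow_mul, hβ, one_pow]
  have hαβ' : α = (β ^ (s / pr)) ^ pr := by
    rw [← pow_mul, Nat.div_mul_cancel hprs]; exact hαβ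
  by_cases hpl : pr ∣ ℓ
  · exact hprp.ne_one (h0.2.2 pr _ hpl hβ' hαβ')
  · exact hprp.ne_one
      ((h pr hprp (hprs.trans hsR) hpl).2.2 pr _ (dvd_mul_left pr ℓ) hβ' hαβ')

/-- `polyAction` turns multiplication of linearized polynomials into composition. -/
lemma polyAction_mul (q pc e : ℕ) (hp : pc.Prime) (hq : q = pc ^ e)
    {Fq K : Type*} [Field Fq] [Field K] [Algebra Fq K] [Fintype Fq]
    (hcard : Fintype.card Fq = q) (hchar : CharP K pc)
    (a b : Polynomial Fq) (β : K) :
    polyAction q (a * b) β = polyAction q a (polyAction q b β) := by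
  haveI := hchar
  haveI : Fact pc.Prime := ⟨hp⟩
  haveI : ExpChar K pc := ExpChar.prime hp
  set σ : AddMonoid.End K := (iterateFrobenius K pc e).toAddMonoidHom with hσdef
  have hσ : ∀ x : K, σ x = x ^ q := by
    intro x
    show iterateFrobenius K pc e x = x ^ q
    rw [iterateFrobenius_def, hq]
  set φ : Fq →+* AddMonoid.End K :=
    (Module.toAddMonoidEnd K K).comp (algebraMap Fq K) with hφdef
  have hφ : ∀ (c : Fq) (x : K), φ c x = algebraMap Fq K c * x := fun c x => rfl
  have hcomm : ∀ c : Fq, Commute (φ c) σ := by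
    intro c
    have hcq : algebraMap Fq K c ^ q = algebraMap Fq K c := by
      rw [← map_pow]
      congr 1
      have := FiniteField.pow_card c
      rwa [hcard] at this
    show φ c * σ = σ * φ c
    refine AddMonoidHom.ext fun x => ?_
    show φ c (σ x) = σ (φ c x)
    rw [hφ, hφ, hσ, hσ, mul_pow, hcq]
  have hpow : ∀ (i : ℕ) (x : K), (σ ^ i) x = x ^ q ^ i := by
    intro i
    induction i with
    | zero => intro x; simp
    | succ i ih =>
        intro x
        rw [pow_succ']
        show σ ((σ ^ i) x) = x ^ q ^ (i + 1)
        rw [ih, hσ, ← pow_mul, pow_succ', Nat.mul_comm]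
  have key : ∀ (f : Polynomial Fq) (α : K), polyAction q f α = Polynomial.eval₂ φ σ f α := by
    intro f α
    rw [Polynomial.eval₂_eq_sum]
    unfold polyAction Polynomial.sum
    erw [AddMonoidHom.finset_sum_apply]
    refine Finset.sum_congr rfl fun i _ => ?_
    show algebraMap Fq K (f.coeff i) * α ^ q ^ i = (φ (f.coeff i) * (σ ^ i)) α
    show algebraMap Fq K (f.coeff i) * α ^ q ^ i = φ (f.coeff i) ((σ ^ i) α)
    rw [hφ, hpow]
  have hmul : Polynomial.eval₂ φ σ (a * b)
      = Polynomial.eval₂ φ σ a * Polynomial.eval₂ φ σ b :=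
    map_mul (Polynomial.eval₂RingHom' φ σ hcomm) a b
  rw [key, key, key, hmul]
  rfl

lemma gFree_sieve (q pc e : ℕ) (hp : pc.Prime) (hq : q = pc ^ e)
    {Fq K : Type*} [Field Fq] [Field K] [Algebra Fq K] [Fintype Fq]
    (hcard : Fintype.card Fq = q) (hchar : CharP K pc)
    {g G : Polynomial Fq} {β : K}
    (h0 : gFree q g β)
    (h : ∀ P : Polynomial Fq, P.Monic → Irreducible P → P ∣ G → ¬P ∣ g →
      gFree q (g * P) β) :
    gFree q G β := by
  rintro ⟨h', γ, hm, hd, hne, heq⟩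
  have hne0 : h' ≠ 0 := hm.ne_zero
  have hnu : ¬IsUnit h' := fun hu => hne (hm.eq_one_of_isUnit hu)
  obtain ⟨P₀, hirr₀, hdvd₀⟩ := WfDvdMonoid.exists_irreducible_factor hnu hne0
  set P := normalize P₀ with hPdef
  have hPirr : Irreducible P := (normalize_associated P₀).symm.irreducible hirr₀
  have hPm : P.Monic := Polynomial.monic_normalize hirr₀.ne_zero
  have hPdh : P ∣ h' := normalize_dvd_iff.mpr hdvd₀
  obtain ⟨c, hc⟩ := hPdh
  have heq2 : β = polyAction q P (polyAction q c γ) := by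
    rw [heq, hc, polyAction_mul q pc e hp hq hcard hchar]
  have hP1 : P ≠ 1 := hPirr.ne_one
  by_cases hPg : P ∣ g
  · exact h0 ⟨P, _, hPm, hPg, hP1, heq2⟩
  · exact (h P hPm hPirr ((Dvd.intro c hc.symm).trans hd) hPg)
      ⟨P, _, hPm, dvd_mul_left P g, hP1, heq2⟩

end SieveAux

/-- Lemma 3.3 (sieve inequality). -/
theorem stmt2 (q n p e : ℕ) (hp : p.Prime) (he : 0 < e) (hqpe : q = p ^ e) (hn : 0 < n)
    {Fq K : Type} [Field Fq] [Field K] [Algebra Fq K] [Fintype Fq] [Fintype K]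
    (hcardFq : Fintype.card Fq = q) (hcardK : Fintype.card K = q ^ n)
    (r1 r2 : ℕ) (hr1pos : 0 < r1) (hr2pos : 0 < r2)
    (hr1 : r1 ∣ q ^ n - 1) (hr2 : r2 ∣ q ^ n - 1)
    (f1 f2 : Polynomial Fq) (hf1m : f1.Monic) (hf2m : f2.Monic)
    (hf1 : f1 ∣ X ^ n - 1) (hf2 : f2 ∣ X ^ n - 1)
    (k1 k2 : ℕ) (hk1 : f1.natDegree = k1) (hk2 : f2.natDegree = k2)
    (m1 m2 : ℕ) (hm : 1 ≤ m1 + m2) (hmlt : ((m1 + m2 : ℕ) : ℝ) < (q : ℝ) ^ ((n : ℝ) / 2))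
    (F1 F2 : Polynomial K) (hF : Upsilon (q ^ n) m1 m2 F1 F2)
    (R1 R2 : ℕ) (hR1 : R1 ∣ (q ^ n - 1) / r1) (hR2 : R2 ∣ (q ^ n - 1) / r2)
    (ℓ1 ℓ2 : ℕ) (hℓ1 : ℓ1 ∣ R1) (hℓ2 : ℓ2 ∣ R2)
    (g1 g2 : Polynomial Fq) (hg1m : g1.Monic) (hg2m : g2.Monic)
    (hg1 : g1 ∣ X ^ n - 1) (hg2 : g2 ∣ X ^ n - 1)
    (Ps Qs : Finset (Polynomial Fq))
    (hPs : ∀ P : Polynomial Fq,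
      P ∈ Ps ↔ P.Monic ∧ Irreducible P ∧ P ∣ X ^ n - 1 ∧ ¬P ∣ g1)
    (hQs : ∀ Q : Polynomial Fq,
      Q ∈ Qs ↔ Q.Monic ∧ Irreducible Q ∧ Q ∣ X ^ n - 1 ∧ ¬Q ∣ g2) :
    (NFcount q n r1 r2 f1 f2 F1 F2 R1 R2 (X ^ n - 1) (X ^ n - 1) : ℤ) ≥
      (∑ p' ∈ R1.primeFactors.filter (fun p' => ¬p' ∣ ℓ1),
        (NFcount q n r1 r2 f1 f2 F1 F2 (ℓ1 * p') ℓ2 g1 g2 : ℤ)) +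
      (∑ p' ∈ R2.primeFactors.filter (fun p' => ¬p' ∣ ℓ2),
        (NFcount q n r1 r2 f1 f2 F1 F2 ℓ1 (ℓ2 * p') g1 g2 : ℤ)) +
      (∑ P ∈ Ps, (NFcount q n r1 r2 f1 f2 F1 F2 ℓ1 ℓ2 (g1 * P) g2 : ℤ)) +
      (∑ Q ∈ Qs, (NFcount q n r1 r2 f1 f2 F1 F2 ℓ1 ℓ2 g1 (g2 * Q) : ℤ)) -
      (((R1.primeFactors.filter (fun p' => ¬p' ∣ ℓ1)).card +
        (R2.primeFactors.filter (fun p' => ¬p' ∣ ℓ2)).card + Ps.card + Qs.card : ℤ) - 1) *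
        (NFcount q n r1 r2 f1 f2 F1 F2 ℓ1 ℓ2 g1 g2 : ℤ) := by
  classical
  -- basic numerology
  have hq2 : 1 < q := by
    rw [hqpe]; exact Nat.one_lt_pow he.ne' hp.one_lt
  have hqn1 : 1 < q ^ n := Nat.one_lt_pow hn.ne' hq2
  have hqn1pos : 0 < q ^ n - 1 := by omega
  have hN1pos : 0 < (q ^ n - 1) / r1 := Nat.div_pos (Nat.le_of_dvd hqn1pos hr1) hr1pos
  have hN2pos : 0 < (q ^ n - 1) / r2 := Nat.div_pos (Nat.le_of_dvd hqn1pos hr2) hr2pos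
  have hR1ne : R1 ≠ 0 := by
    rintro rfl; exact hN1pos.ne' (zero_dvd_iff.mp hR1)
  have hR2ne : R2 ≠ 0 := by
    rintro rfl; exact hN2pos.ne' (zero_dvd_iff.mp hR2)
  -- characteristic of K
  haveI hcharK : CharP K p := by
    haveI : CharP K (ringChar K) := ringChar.charP K
    obtain ⟨m, hrp, hcm⟩ := FiniteField.card K (ringChar K)
    have h1 : p ∣ ringChar K ^ (m : ℕ) := by
      rw [← hcm, hcardK, hqpe, ← pow_mul]
      exact dvd_pow_self p (by positivity)
    have h2 : p = ringChar K :=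
      (Nat.prime_dvd_prime_iff_eq hp hrp).mp (hp.dvd_of_dvd_pow h1)
    exact h2 ▸ ringChar.charP K
  -- the index data for the sieve
  set A1 := R1.primeFactors.filter (fun p' => ¬p' ∣ ℓ1) with hA1
  set A2 := R2.primeFactors.filter (fun p' => ¬p' ∣ ℓ2) with hA2
  set S0 : Set (K × K × K) := Sset q n r1 r2 f1 f2 F1 F2 ℓ1 ℓ2 g1 g2 with hS0
  set T : (ℕ ⊕ ℕ) ⊕ (Polynomial Fq ⊕ Polynomial Fq) → Set (K × K × K) :=
    Sum.elim
      (Sum.elim (fun p' => {t | RrFree q n (ℓ1 * p') r1 t.1})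
        (fun p' => {t | RrFree q n (ℓ2 * p') r2 (F1.eval t.1 / F2.eval t.1)}))
      (Sum.elim (fun P => {t | gFree q (g1 * P) t.2.1})
        (fun Q => {t | gFree q (g2 * Q) t.2.2})) with hTdef
  set I := (A1.disjSum A2).disjSum (Ps.disjSum Qs) with hI
  -- the individual sifted sets
  have hset1 : ∀ p' : ℕ, Sset q n r1 r2 f1 f2 F1 F2 (ℓ1 * p') ℓ2 g1 g2
      = S0 ∩ T (.inl (.inl p')) := by
    intro p'
    ext t
    simp only [hS0, hTdef, Sset, Set.mem_setOf_eq, Set.mem_inter_iff, Sum.elim_inl]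
    constructor
    · rintro ⟨h1, h2, h3, h4, h5, h6, h7, h8, h9⟩
      exact ⟨⟨h1, h2, h3, RrFree_mono (dvd_mul_right ℓ1 p') h4, h5, h6, h7, h8, h9⟩, h4⟩
    · rintro ⟨⟨h1, h2, h3, -, h5, h6, h7, h8, h9⟩, h4⟩
      exact ⟨h1, h2, h3, h4, h5, h6, h7, h8, h9⟩
  have hset2 : ∀ p' : ℕ, Sset q n r1 r2 f1 f2 F1 F2 ℓ1 (ℓ2 * p') g1 g2
      = S0 ∩ T (.inl (.inr p')) := by
    intro p'
    ext t
    simp only [hS0, hTdef, Sset, Set.mem_setOf_eq, Set.mem_inter_iff, Sum.elim_inl,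
      Sum.elim_inr]
    constructor
    · rintro ⟨h1, h2, h3, h4, h5, h6, h7, h8, h9⟩
      exact ⟨⟨h1, h2, h3, h4, RrFree_mono (dvd_mul_right ℓ2 p') h5, h6, h7, h8, h9⟩, h5⟩
    · rintro ⟨⟨h1, h2, h3, h4, -, h6, h7, h8, h9⟩, h5⟩
      exact ⟨h1, h2, h3, h4, h5, h6, h7, h8, h9⟩
  have hset3 : ∀ P : Polynomial Fq, Sset q n r1 r2 f1 f2 F1 F2 ℓ1 ℓ2 (g1 * P) g2
      = S0 ∩ T (.inr (.inl P)) := by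
    intro P
    ext t
    simp only [hS0, hTdef, Sset, Set.mem_setOf_eq, Set.mem_inter_iff, Sum.elim_inl,
      Sum.elim_inr]
    constructor
    · rintro ⟨h1, h2, h3, h4, h5, h6, h7, h8, h9⟩
      exact ⟨⟨h1, h2, h3, h4, h5, gFree_mono (dvd_mul_right g1 P) h6, h7, h8, h9⟩, h6⟩
    · rintro ⟨⟨h1, h2, h3, h4, h5, -, h7, h8, h9⟩, h6⟩
      exact ⟨h1, h2, h3, h4, h5, h6, h7, h8, h9⟩
  have hset4 : ∀ Q : Polynomial Fq, Sset q n r1 r2 f1 f2 F1 F2 ℓ1 ℓ2 g1 (g2 * Q)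
      = S0 ∩ T (.inr (.inr Q)) := by
    intro Q
    ext t
    simp only [hS0, hTdef, Sset, Set.mem_setOf_eq, Set.mem_inter_iff, Sum.elim_inl,
      Sum.elim_inr]
    constructor
    · rintro ⟨h1, h2, h3, h4, h5, h6, h7, h8, h9⟩
      exact ⟨⟨h1, h2, h3, h4, h5, h6, gFree_mono (dvd_mul_right g2 Q) h7, h8, h9⟩, h7⟩
    · rintro ⟨⟨h1, h2, h3, h4, h5, h6, -, h8, h9⟩, h7⟩
      exact ⟨h1, h2, h3, h4, h5, h6, h7, h8, h9⟩
  -- the sieve inequality for the intersection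
  have hineq := sieve_ncard I S0 T
  rw [hI, Finset.sum_disjSum, Finset.sum_disjSum, Finset.sum_disjSum,
    Finset.card_disjSum, Finset.card_disjSum, Finset.card_disjSum] at hineq
  -- the intersection is contained in the fully-free set
  have hsub : S0 ∩ ⋂ i ∈ I, T i
      ⊆ Sset q n r1 r2 f1 f2 F1 F2 R1 R2 (X ^ n - 1) (X ^ n - 1) := by
    rintro t ⟨ht0, hT⟩
    simp only [Set.mem_iInter] at hT
    obtain ⟨h1, h2, h3, h4, h5, h6, h7, h8, h9⟩ := ht0
    refine ⟨h1, h2, h3, ?_, ?_, ?_, ?_, h8, h9⟩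
    · refine RrFree_sieve hR1ne h4 fun p' hp' hd hnd => ?_
      have hmem : (.inl (.inl p') : (ℕ ⊕ ℕ) ⊕ (Polynomial Fq ⊕ Polynomial Fq)) ∈ I := by
        simp [hI, hA1, Finset.inl_mem_disjSum, Finset.mem_filter,
          Nat.mem_primeFactors, hp', hd, hnd, hR1ne]
      simpa [hTdef] using hT _ hmem
    · refine RrFree_sieve hR2ne h5 fun p' hp' hd hnd => ?_
      have hmem : (.inl (.inr p') : (ℕ ⊕ ℕ) ⊕ (Polynomial Fq ⊕ Polynomial Fq)) ∈ I := by
        simp [hI, hA2, Finset.inl_mem_disjSum, Finset.inr_mem_disjSum, Finset.mem_filter,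
          Nat.mem_primeFactors, hp', hd, hnd, hR2ne]
      simpa [hTdef] using hT _ hmem
    · refine gFree_sieve q p e hp hqpe hcardFq hcharK h6
        fun P hPm hPirr hPd hPnd => ?_
      have hmem : (.inr (.inl P) : (ℕ ⊕ ℕ) ⊕ (Polynomial Fq ⊕ Polynomial Fq)) ∈ I := by
        simp [hI, Finset.inr_mem_disjSum, Finset.inl_mem_disjSum,
          (hPs P).mpr ⟨hPm, hPirr, hPd, hPnd⟩]
      simpa [hTdef] using hT _ hmem
    · refine gFree_sieve q p e hp hqpe hcardFq hcharK h7
        fun Q hQm hQirr hQd hQnd => ?_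
      have hmem : (.inr (.inr Q) : (ℕ ⊕ ℕ) ⊕ (Polynomial Fq ⊕ Polynomial Fq)) ∈ I := by
        simp [hI, Finset.inr_mem_disjSum,
          (hQs Q).mpr ⟨hQm, hQirr, hQd, hQnd⟩]
      simpa [hTdef] using hT _ hmem
  have hfin : ((S0 ∩ ⋂ i ∈ I, T i).ncard : ℤ)
      ≤ (NFcount q n r1 r2 f1 f2 F1 F2 R1 R2 (X ^ n - 1) (X ^ n - 1) : ℤ) := by
    rw [NFcount_eq_ncard_Sset]
    exact_mod_cast Set.ncard_le_ncard hsub (Set.toFinite _)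
  -- rewrite the goal in terms of `ncard`s
  have e1 : ∀ p' ∈ A1, ((NFcount q n r1 r2 f1 f2 F1 F2 (ℓ1 * p') ℓ2 g1 g2 : ℕ) : ℤ)
      = ((S0 ∩ T (.inl (.inl p'))).ncard : ℤ) := by
    intro p' _
    rw [NFcount_eq_ncard_Sset, hset1]
  have e2 : ∀ p' ∈ A2, ((NFcount q n r1 r2 f1 f2 F1 F2 ℓ1 (ℓ2 * p') g1 g2 : ℕ) : ℤ)
      = ((S0 ∩ T (.inl (.inr p'))).ncard : ℤ) := by
    intro p' _
    rw [NFcount_eq_ncard_Sset, hset2]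
  have e3 : ∀ P ∈ Ps, ((NFcount q n r1 r2 f1 f2 F1 F2 ℓ1 ℓ2 (g1 * P) g2 : ℕ) : ℤ)
      = ((S0 ∩ T (.inr (.inl P))).ncard : ℤ) := by
    intro P _
    rw [NFcount_eq_ncard_Sset, hset3]
  have e4 : ∀ Q ∈ Qs, ((NFcount q n r1 r2 f1 f2 F1 F2 ℓ1 ℓ2 g1 (g2 * Q) : ℕ) : ℤ)
      = ((S0 ∩ T (.inr (.inr Q))).ncard : ℤ) := by
    intro Q _
    rw [NFcount_eq_ncard_Sset, hset4]
  have e0 : ((NFcount q n r1 r2 f1 f2 F1 F2 ℓ1 ℓ2 g1 g2 : ℕ) : ℤ) = (S0.ncard : ℤ) := by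
    rw [hS0, NFcount_eq_ncard_Sset]
  rw [ge_iff_le, Finset.sum_congr rfl e1, Finset.sum_congr rfl e2,
    Finset.sum_congr rfl e3, Finset.sum_congr rfl e4, e0]
  refine le_trans ?_ hfin
  push_cast at hineq ⊢
  linarith
end

section
/- For any positive integers R and r, Σ_{d ∣ R} (|μ(d_{(r)})| / φ(d_{(r)})) · φ(d) = gcd(R, r) · W(gcd(R, R_{(r)})), where the sum runs over all positive divisors d of R. -/
/-- For positive integers `a`, `b`, `a_(b)` denotes `a / gcd(a, b)`. -/
def natPart (a b : ℕ) : ℕ := a / Nat.gcd a b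

open ArithmeticFunction Finset
open scoped ArithmeticFunction.Moebius ArithmeticFunction.zeta

namespace Stmt12Aux

lemma natPart_zero (r : ℕ) : natPart 0 r = 0 := by simp [natPart]

lemma natPart_one (r : ℕ) : natPart 1 r = 1 := by simp [natPart]

lemma natPart_dvd (a b : ℕ) : natPart a b ∣ a :=
  Nat.div_dvd_of_dvd (Nat.gcd_dvd_left a b)

lemma gcd_mul_coprime {m n : ℕ} (r : ℕ) (h : m.Coprime n) :
    Nat.gcd (m * n) r = Nat.gcd m r * Nat.gcd n r := by
  rw [Nat.gcd_comm, Nat.Coprime.gcd_mul r h, Nat.gcd_comm m, Nat.gcd_comm n]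

lemma natPart_mul {m n : ℕ} (r : ℕ) (h : m.Coprime n) :
    natPart (m * n) r = natPart m r * natPart n r := by
  unfold natPart
  rw [gcd_mul_coprime r h,
    ← Nat.div_mul_div_comm (Nat.gcd_dvd_left m r) (Nat.gcd_dvd_left n r)]

lemma natPart_coprime {m n : ℕ} (r : ℕ) (h : m.Coprime n) :
    (natPart m r).Coprime (natPart n r) :=
  Nat.Coprime.coprime_dvd_left (natPart_dvd m r)
    (Nat.Coprime.coprime_dvd_right (natPart_dvd n r) h)

/-- The summand as an arithmetic function. -/
noncomputable def gfun (r : ℕ) : ArithmeticFunction ℚ :=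
  ⟨fun d => ((|μ (natPart d r)| : ℤ) : ℚ) / (Nat.totient (natPart d r) : ℚ)
      * (Nat.totient d : ℚ),
    by simp [natPart_zero]⟩

lemma gfun_apply (r d : ℕ) :
    gfun r d = ((|μ (natPart d r)| : ℤ) : ℚ) / (Nat.totient (natPart d r) : ℚ)
      * (Nat.totient d : ℚ) := rfl

lemma gfun_mult (r : ℕ) : (gfun r).IsMultiplicative := by
  constructor
  · simp [gfun_apply, natPart_one]
  · intro m n h
    rcases eq_or_ne m 0 with rfl | hm
    · rw [Nat.coprime_zero_left] at h; subst h
      simp [gfun_apply, natPart_zero]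
    rcases eq_or_ne n 0 with rfl | hn
    · rw [Nat.coprime_zero_right] at h; subst h
      simp [gfun_apply, natPart_zero]
    have hAB := natPart_coprime r h
    rw [gfun_apply, gfun_apply, gfun_apply, natPart_mul r h,
      isMultiplicative_moebius.map_mul_of_coprime hAB, abs_mul,
      Nat.totient_mul hAB, Nat.totient_mul h]
    push_cast
    ring

/-- `|μ|` as an arithmetic function with values in `ℚ`. -/
noncomputable def muabs : ArithmeticFunction ℚ :=
  ⟨fun d => ((|μ d| : ℤ) : ℚ), by simp⟩

lemma muabs_apply (d : ℕ) : muabs d = ((|μ d| : ℤ) : ℚ) := rfl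

lemma muabs_mult : muabs.IsMultiplicative := by
  constructor
  · simp [muabs_apply]
  · intro m n h
    rw [muabs_apply, muabs_apply, muabs_apply,
      isMultiplicative_moebius.map_mul_of_coprime h, abs_mul]
    push_cast
    ring

lemma muabs_squarefree {d : ℕ} (h : Squarefree d) : muabs d = 1 := by
  rw [muabs_apply, moebius_apply_of_squarefree h]
  simp [abs_pow]

lemma muabs_not_squarefree {d : ℕ} (h : ¬ Squarefree d) : muabs d = 0 := by
  rw [muabs_apply, moebius_eq_zero_of_not_squarefree h]
  simp

lemma Wnat_eq (t : ℕ) : (Wnat t : ℚ) = (↑ζ * muabs) t := by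
  rw [coe_zeta_mul_apply, Wnat, Finset.card_filter]
  push_cast
  refine Finset.sum_congr rfl fun d _ => ?_
  by_cases hd : Squarefree d
  · rw [muabs_squarefree hd, if_pos hd]
  · rw [muabs_not_squarefree hd, if_neg hd]

/-- The right-hand side as an arithmetic function. -/
noncomputable def Gfun (r : ℕ) : ArithmeticFunction ℚ :=
  ⟨fun R => (Nat.gcd R r : ℚ) * ((↑ζ * muabs) (natPart R r)), by simp [natPart_zero]⟩

lemma Gfun_apply (r R : ℕ) :
    Gfun r R = (Nat.gcd R r : ℚ) * ((↑ζ * muabs) (natPart R r)) := rfl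

lemma Smu_mult : (↑ζ * muabs : ArithmeticFunction ℚ).IsMultiplicative :=
  isMultiplicative_zeta.natCast.mul muabs_mult

lemma Gfun_mult (r : ℕ) : (Gfun r).IsMultiplicative := by
  constructor
  · rw [Gfun_apply, natPart_one, Nat.gcd_one_left, Smu_mult.map_one]
    simp
  · intro m n h
    rcases eq_or_ne m 0 with rfl | hm
    · rw [Nat.coprime_zero_left] at h; subst h
      simp [Gfun_apply, natPart_zero]
    rcases eq_or_ne n 0 with rfl | hn
    · rw [Nat.coprime_zero_right] at h; subst h
      simp [Gfun_apply, natPart_zero]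
    rw [Gfun_apply, Gfun_apply, Gfun_apply, natPart_mul r h, gcd_mul_coprime r h,
      Smu_mult.map_mul_of_coprime (natPart_coprime r h)]
    push_cast
    ring

lemma gcd_prime_pow {p r : ℕ} (hp : p.Prime) (hr : r ≠ 0) (i : ℕ) :
    Nat.gcd (p ^ i) r = p ^ min i (r.factorization p) := by
  have h1 : p ^ min i (r.factorization p) ∣ Nat.gcd (p ^ i) r :=
    Nat.dvd_gcd (pow_dvd_pow p (min_le_left _ _))
      ((pow_dvd_pow p (min_le_right _ _)).trans (Nat.ordProj_dvd r p))
  obtain ⟨k, hk, hke⟩ := (Nat.dvd_prime_pow hp).mp (Nat.gcd_dvd_left (p ^ i) r)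
  have hk2 : k ≤ r.factorization p :=
    (hp.pow_dvd_iff_le_factorization hr).mp (hke ▸ Nat.gcd_dvd_right (p ^ i) r)
  rw [hke] at h1 ⊢
  have hle : min i (r.factorization p) ≤ k :=
    (Nat.pow_dvd_pow_iff_le_right hp.one_lt).mp h1
  have : k = min i (r.factorization p) := le_antisymm (le_min hk hk2) hle
  rw [this]

lemma natPart_prime_pow {p r : ℕ} (hp : p.Prime) (hr : r ≠ 0) (i : ℕ) :
    natPart (p ^ i) r = p ^ (i - r.factorization p) := by
  rw [natPart, gcd_prime_pow hp hr, Nat.pow_div (min_le_left _ _) hp.pos]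
  congr 1
  omega

lemma sum_totient_pp {p : ℕ} (hp : p.Prime) (m : ℕ) :
    ∑ j ∈ Finset.range (m + 1), Nat.totient (p ^ j) = p ^ m := by
  have := Nat.sum_totient (p ^ m)
  rwa [Nat.sum_divisors_prime_pow hp] at this

lemma Smu_pp {p : ℕ} (hp : p.Prime) {k : ℕ} (hk : 1 ≤ k) :
    (↑ζ * muabs : ArithmeticFunction ℚ) (p ^ k) = 2 := by
  rw [coe_zeta_mul_apply, Nat.sum_divisors_prime_pow hp]
  obtain ⟨c, rfl⟩ : ∃ c, k = c + 1 := ⟨k - 1, by omega⟩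
  rw [Finset.sum_range_succ']
  have h0 : muabs (p ^ 0) = 1 := by
    rw [pow_zero]; exact muabs_squarefree squarefree_one
  rw [h0, Finset.sum_range_succ']
  have h1 : muabs (p ^ (0 + 1)) = 1 := by
    rw [zero_add, pow_one]; exact muabs_squarefree hp.squarefree
  rw [h1]
  have h2 : ∀ j ∈ Finset.range c, muabs (p ^ (j + 1 + 1)) = 0 := by
    intro j _
    refine muabs_not_squarefree fun hsq => ?_
    rw [Nat.squarefree_pow_iff hp.ne_one (by omega)] at hsq
    omega
  rw [Finset.sum_congr rfl h2]
  simp only [Finset.sum_const_zero, zero_add]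
  norm_num

lemma prime_pow_eq {p r : ℕ} (hp : p.Prime) (hr : r ≠ 0) (i : ℕ) :
    (↑ζ * gfun r) (p ^ i) = Gfun r (p ^ i) := by
  set b := r.factorization p with hb
  have hgval : ∀ j : ℕ, gfun r (p ^ j) =
      ((|μ (p ^ (j - b))| : ℤ) : ℚ) / (Nat.totient (p ^ (j - b)) : ℚ)
        * (Nat.totient (p ^ j) : ℚ) := by
    intro j
    rw [gfun_apply, natPart_prime_pow hp hr]
  rw [coe_zeta_mul_apply, Nat.sum_divisors_prime_pow hp,
    Gfun_apply, gcd_prime_pow hp hr, natPart_prime_pow hp hr]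
  rcases le_or_gt i b with hib | hib
  · -- i ≤ b : both sides are p ^ i
    have hmin : min i b = i := min_eq_left hib
    have hsub : i - b = 0 := by omega
    rw [hmin, hsub, pow_zero]
    have hterm : ∀ j ∈ Finset.range (i + 1), gfun r (p ^ j) = (Nat.totient (p ^ j) : ℚ) := by
      intro j hj
      rw [Finset.mem_range] at hj
      have : j - b = 0 := by omega
      rw [hgval j, this, pow_zero]
      simp
    rw [Finset.sum_congr rfl hterm, ← Nat.cast_sum, sum_totient_pp hp i]
    have hSmu1 : (↑ζ * muabs : ArithmeticFunction ℚ) 1 = 1 := Smu_mult.map_one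
    rw [hSmu1, mul_one]
  · -- i > b
    have hmin : min i b = b := min_eq_right (le_of_lt hib)
    rw [hmin]
    have hb1 : b + 1 ≤ i + 1 := by omega
    rw [Finset.range_eq_Ico, ← Finset.sum_Ico_consecutive _ (Nat.zero_le (b + 1)) hb1]
    have hpart1 : ∑ j ∈ Finset.Ico 0 (b + 1), gfun r (p ^ j) = (p : ℚ) ^ b := by
      have hterm : ∀ j ∈ Finset.Ico 0 (b + 1), gfun r (p ^ j) = (Nat.totient (p ^ j) : ℚ) := by
        intro j hj
        rw [Finset.mem_Ico] at hj
        have : j - b = 0 := by omega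
        rw [hgval j, this, pow_zero]
        simp
      rw [Finset.sum_congr rfl hterm, ← Finset.range_eq_Ico, ← Nat.cast_sum,
        sum_totient_pp hp b]
      push_cast
      ring
    have hpart2 : ∑ j ∈ Finset.Ico (b + 1) (i + 1), gfun r (p ^ j) = (p : ℚ) ^ b := by
      rw [Finset.sum_eq_single_of_mem (b + 1)
        (Finset.mem_Ico.mpr ⟨le_refl _, by omega⟩)]
      · rw [hgval (b + 1)]
        have h1 : b + 1 - b = 1 := by omega
        rw [h1, pow_one, moebius_apply_prime hp,
          Nat.totient_prime hp, Nat.totient_prime_pow hp (Nat.succ_pos b)]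
        have hp1 : (1 : ℚ) ≤ (p : ℚ) := by exact_mod_cast hp.one_le
        have hpne : (p : ℚ) - 1 ≠ 0 := by
          have : (2 : ℚ) ≤ (p : ℚ) := by exact_mod_cast hp.two_le
          linarith
        rw [Nat.cast_sub hp.one_le]
        push_cast
        rw [abs_neg, abs_one]
        field_simp
        rw [Nat.cast_sub hp.one_le]
        push_cast
        ring
      · intro j hj hne
        rw [Finset.mem_Ico] at hj
        rw [hgval j]
        have h2 : ¬ Squarefree (p ^ (j - b)) := by
          intro hsq
          rw [Nat.squarefree_pow_iff hp.ne_one (by omega)] at hsq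
          omega
        rw [moebius_eq_zero_of_not_squarefree h2]
        simp
    rw [hpart1, hpart2, Smu_pp hp (by omega : 1 ≤ i - b)]
    push_cast
    ring

end Stmt12Aux

open Stmt12Aux in
/-- Lemma 2.5: `Σ_{d ∣ R} |μ(d_(r))|/φ(d_(r)) · φ(d) = gcd(R,r) · W(gcd(R, R_(r)))`. -/
theorem stmt12 (R r : ℕ) (hR : 0 < R) (hr : 0 < r) :
    ∑ d ∈ R.divisors,
        ((|ArithmeticFunction.moebius (natPart d r)| : ℤ) : ℚ) /
          (Nat.totient (natPart d r) : ℚ) * (Nat.totient d : ℚ) =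
      (Nat.gcd R r : ℚ) * (Wnat (Nat.gcd R (natPart R r)) : ℚ) := by
  have hFG : (↑ζ * gfun r : ArithmeticFunction ℚ) = Gfun r :=
    (ArithmeticFunction.IsMultiplicative.eq_iff_eq_on_prime_powers
      (↑ζ * gfun r : ArithmeticFunction ℚ)
      (isMultiplicative_zeta.natCast.mul (gfun_mult r)) (Gfun r) (Gfun_mult r)).mpr
      (fun p i hp => prime_pow_eq hp hr.ne' i)
  have hL : ∑ d ∈ R.divisors,
      ((|ArithmeticFunction.moebius (natPart d r)| : ℤ) : ℚ) /
        (Nat.totient (natPart d r) : ℚ) * (Nat.totient d : ℚ)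
      = (↑ζ * gfun r : ArithmeticFunction ℚ) R := by
    rw [coe_zeta_mul_apply]
    exact Finset.sum_congr rfl fun d _ => (gfun_apply r d).symm
  rw [hL, hFG, Gfun_apply, Nat.gcd_eq_right (natPart_dvd R r), Wnat_eq]
end

section
/- Let f ∈ 𝔽_q[x] be a monic divisor of x^n−1 of degree k and let χ be an additive character of 𝔽_{q^n}. Then the set {ψ : ψ is an additive character of 𝔽_{q^n} and χ = f ∘ ψ} has exactly q^k elements if Ord(χ) divides (x^n−1)/f, and it is empty if Ord(χ) does not divide (x^n−1)/f. -/
open Polynomial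
open scoped Classical

section AuxChar

open Function

variable {G : Type} [AddCommGroup G] [Fintype G]

/-- Characters vanishing on a subgroup correspond to characters of the quotient. -/
noncomputable def stmt14VanishEquiv (H : AddSubgroup G) :
    AddChar (G ⧸ H) ℂ ≃ {χ : AddChar G ℂ // ∀ a ∈ H, χ a = 1} where
  toFun φ := ⟨φ.compAddMonoidHom (QuotientAddGroup.mk' H), fun a ha => by
    simp [AddChar.compAddMonoidHom_apply, (QuotientAddGroup.eq_zero_iff a).2 ha]⟩
  invFun χ := AddChar.toAddMonoidHomEquiv.symm
    (QuotientAddGroup.lift H (AddChar.toAddMonoidHomEquiv χ.1)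
      (fun a ha => by simpa using congrArg Additive.ofMul (χ.2 a ha)))
  left_inv φ := by
    ext x
    induction x using QuotientAddGroup.induction_on with
    | H a => simp
  right_inv χ := by
    ext a
    simp

lemma stmt14_card_vanish (H : AddSubgroup G) :
    Nat.card {χ : AddChar G ℂ // ∀ a ∈ H, χ a = 1} = Nat.card (G ⧸ H) := by
  classical
  have : Fintype (G ⧸ H) := Fintype.ofFinite _
  rw [← Nat.card_congr (stmt14VanishEquiv H), Nat.card_eq_fintype_card, AddChar.card_eq,
    Nat.card_eq_fintype_card]

lemma stmt14_card_quot_range_eq_card_ker (L : G →+ G) :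
    Nat.card (G ⧸ L.range) = Nat.card L.ker := by
  have h1 : Nat.card G = Nat.card (G ⧸ L.range) * Nat.card L.range :=
    AddSubgroup.card_eq_card_quotient_mul_card_addSubgroup L.range
  have h2 : Nat.card G = Nat.card (G ⧸ L.ker) * Nat.card L.ker :=
    AddSubgroup.card_eq_card_quotient_mul_card_addSubgroup L.ker
  have h3 : Nat.card (G ⧸ L.ker) = Nat.card L.range :=
    Nat.card_congr (QuotientAddGroup.quotientKerEquivRange L).toEquiv
  have hpos : 0 < Nat.card L.range := Nat.card_pos
  apply Nat.eq_of_mul_eq_mul_right hpos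
  rw [← h1, h2, h3, mul_comm]

lemma stmt14_key (L : G →+ G) (χ : AddChar G ℂ) (hχ : ∀ a ∈ L.ker, χ a = 1) :
    {ψ : AddChar G ℂ | ∀ a, χ a = ψ (L a)}.ncard = Nat.card L.ker := by
  classical
  set T : AddChar G ℂ →* AddChar G ℂ :=
    MonoidHom.mk' (fun ψ => ψ.compAddMonoidHom L) (fun a b => by ext x; simp) with hT
  have hTapp : ∀ ψ : AddChar G ℂ, ∀ a, T ψ a = ψ (L a) := fun ψ a => rfl
  have ek : Nat.card T.ker = Nat.card L.ker := by
    have e : T.ker ≃ {ψ : AddChar G ℂ // ∀ a ∈ L.range, ψ a = 1} := by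
      apply Equiv.subtypeEquivRight
      intro ψ
      constructor
      · intro hψ a ha
        obtain ⟨b, rfl⟩ := ha
        have := DFunLike.congr_fun (hψ : T ψ = 1) b
        simpa [hTapp] using this
      · intro hψ
        have : T ψ = 1 := by
          ext b
          simpa [hTapp] using hψ (L b) ⟨b, rfl⟩
        exact this
    rw [Nat.card_congr e, stmt14_card_vanish, stmt14_card_quot_range_eq_card_ker]
  have hrange : χ ∈ Set.range ⇑T := by
    have hsub : Set.range ⇑T ⊆ {χ' : AddChar G ℂ | ∀ a ∈ L.ker, χ' a = 1} := by
      rintro _ ⟨ψ, rfl⟩ a ha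
      rw [hTapp]
      simp [show L a = 0 from ha]
    have hc1 : Nat.card T.range * Nat.card T.ker = Nat.card (AddChar G ℂ) := by
      rw [← Nat.card_congr (QuotientGroup.quotientKerEquivRange T).toEquiv]
      exact (Subgroup.card_eq_card_quotient_mul_card_subgroup T.ker).symm
    have hc2 : Nat.card {χ' : AddChar G ℂ | ∀ a ∈ L.ker, χ' a = 1} * Nat.card T.ker
        = Nat.card (AddChar G ℂ) := by
      have := stmt14_card_vanish (G := G) L.ker
      have h2 : Nat.card G = Nat.card (G ⧸ L.ker) * Nat.card L.ker :=
        AddSubgroup.card_eq_card_quotient_mul_card_addSubgroup L.ker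
      have hG : Nat.card (AddChar G ℂ) = Nat.card G := by
        rw [Nat.card_eq_fintype_card, Nat.card_eq_fintype_card, AddChar.card_eq]
      rw [show Nat.card {χ' : AddChar G ℂ | ∀ a ∈ L.ker, χ' a = 1}
          = Nat.card {χ' : AddChar G ℂ // ∀ a ∈ L.ker, χ' a = 1} from rfl]
      rw [this, ek, hG, h2]
    have hcard : Nat.card T.range = Nat.card {χ' : AddChar G ℂ | ∀ a ∈ L.ker, χ' a = 1} :=
      Nat.eq_of_mul_eq_mul_right Nat.card_pos (hc1.trans hc2.symm)
    have hseteq : Set.range ⇑T = {χ' : AddChar G ℂ | ∀ a ∈ L.ker, χ' a = 1} := by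
      apply Set.eq_of_subset_of_ncard_le hsub
      rw [← Nat.card_coe_set_eq, ← Nat.card_coe_set_eq]
      exact le_of_eq hcard.symm
    rw [hseteq]
    exact hχ
  obtain ⟨ψ0, hψ0⟩ := hrange
  have hfiber : {ψ : AddChar G ℂ | ∀ a, χ a = ψ (L a)}
      = (fun φ => ψ0 * φ) '' (T.ker : Set (AddChar G ℂ)) := by
    ext ψ
    constructor
    · intro hψ
      refine ⟨ψ0⁻¹ * ψ, ?_, by group⟩
      have : T ψ = χ := by ext a; rw [hTapp]; exact (hψ a).symm
      simp only [SetLike.mem_coe, MonoidHom.mem_ker, map_mul, map_inv, hψ0, this]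
      exact inv_mul_cancel χ
    · rintro ⟨φ, hφ, rfl⟩ a
      have h1 : T (ψ0 * φ) = χ := by
        have hφ1 : T φ = 1 := hφ
        rw [map_mul, hψ0, hφ1, mul_one]
      rw [← h1, hTapp]
  rw [hfiber, Set.ncard_image_of_injective _ (mul_right_injective ψ0),
    ← Nat.card_coe_set_eq]
  exact ek

end AuxChar

section AuxPoly

variable {q n p e : ℕ} {Fq K : Type} [Field Fq] [Field K] [Algebra Fq K] [Fintype Fq] [Fintype K]

lemma stmt14_charPK (hp : p.Prime) (he : 0 < e) (hqpe : q = p ^ e) (hn : 0 < n)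
    (hcardK : Fintype.card K = q ^ n) : CharP K p := by
  have hchar := CharP.char_is_prime K (ringChar K)
  haveI : Fact (Nat.Prime (ringChar K)) := ⟨hchar⟩
  obtain ⟨m, hm, hcard⟩ := FiniteField.card K (ringChar K)
  have : ringChar K = p := by
    have hdvd : ringChar K ∣ p ^ (e * n) := by
      rw [pow_mul, ← hqpe, ← hcardK, hcard]
      exact dvd_pow_self _ (by positivity)
    have := hchar.dvd_of_dvd_pow hdvd
    exact ((Nat.prime_dvd_prime_iff_eq hchar hp).mp this)
  rw [← this]
  exact ringChar.charP K

section act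
variable (hp : p.Prime) (he : 0 < e) (hqpe : q = p ^ e)

include hp he hqpe

lemma stmt14_polyAction_add_right [CharP K p] (u : Polynomial Fq) (α β : K) :
    polyAction q u (α + β) = polyAction q u α + polyAction q u β := by
  haveI : Fact p.Prime := ⟨hp⟩
  unfold polyAction Polynomial.sum
  rw [← Finset.sum_add_distrib]
  apply Finset.sum_congr rfl
  intro i _
  have hqi : q ^ i = p ^ (e * i) := by rw [hqpe, ← pow_mul]
  beta_reduce
  rw [hqi, add_pow_char_pow, mul_add]

lemma stmt14_polyAction_zero_right (u : Polynomial Fq) :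
    polyAction q u (0 : K) = 0 := by
  have hq : 0 < q := by rw [hqpe]; exact pow_pos hp.pos e
  unfold polyAction Polynomial.sum
  apply Finset.sum_eq_zero
  intro i _
  beta_reduce
  rw [zero_pow (pow_ne_zero i hq.ne'), mul_zero]

omit hp he hqpe in
lemma stmt14_polyAction_monomial (i : ℕ) (a : Fq) (α : K) :
    polyAction q (monomial i a) α = algebraMap Fq K a * α ^ q ^ i := by
  unfold polyAction
  exact Polynomial.sum_monomial_index a _ (by simp)

omit hp he hqpe in
lemma stmt14_polyAction_add_left (u v : Polynomial Fq) (α : K) :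
    polyAction q (u + v) α = polyAction q u α + polyAction q v α :=
  Polynomial.sum_add_index u v _ (by simp) (by intros; rw [map_add, add_mul])

lemma stmt14_polyAction_mul [CharP K p] (hcardFq : Fintype.card Fq = q)
    (u v : Polynomial Fq) (α : K) :
    polyAction q (u * v) α = polyAction q u (polyAction q v α) := by
  haveI : Fact p.Prime := ⟨hp⟩
  induction u using Polynomial.induction_on' with
  | add f g hf hg =>
    rw [add_mul, stmt14_polyAction_add_left, stmt14_polyAction_add_left, hf, hg]
  | monomial i a =>
    induction v using Polynomial.induction_on' with
    | add v1 v2 h1 h2 =>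
      have hqi : q ^ i = p ^ (e * i) := by rw [hqpe, ← pow_mul]
      rw [mul_add, stmt14_polyAction_add_left, h1, h2, stmt14_polyAction_add_left,
        stmt14_polyAction_monomial, stmt14_polyAction_monomial, stmt14_polyAction_monomial,
        hqi, add_pow_char_pow, mul_add]
    | monomial j b =>
      rw [Polynomial.monomial_mul_monomial, stmt14_polyAction_monomial,
        stmt14_polyAction_monomial, stmt14_polyAction_monomial, map_mul, mul_pow, ← map_pow,
        ← pow_mul, ← pow_add]
      have hb : b ^ q ^ i = b := by
        rw [← hcardFq]; exact FiniteField.pow_card_pow i b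
      rw [hb, mul_assoc]
      congr 2
      rw [add_comm i j, pow_add, mul_comm]

lemma stmt14_polyAction_X_pow_sub_one (hn : 0 < n) (hcardK : Fintype.card K = q ^ n) (α : K) :
    polyAction q ((X : Polynomial Fq) ^ n - 1) α = 0 := by
  have hrw : (X : Polynomial Fq) ^ n - 1 = monomial n 1 + monomial 0 (-1) := by
    rw [Polynomial.X_pow_eq_monomial, sub_eq_add_neg]
    congr 1
    simp
  rw [hrw, stmt14_polyAction_add_left, stmt14_polyAction_monomial, stmt14_polyAction_monomial]
  have : α ^ q ^ n = α := by rw [← hcardK]; exact FiniteField.pow_card α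
  simp [this]

omit hp he hqpe in
lemma stmt14_ker_bound (hq2 : 2 ≤ q) (u : Polynomial Fq) (hu : u.Monic) :
    {α : K | polyAction q u α = 0}.ncard ≤ q ^ u.natDegree := by
  classical
  set d := u.natDegree with hd
  set P : Polynomial K := ∑ i ∈ u.support, C (algebraMap Fq K (u.coeff i)) * X ^ (q ^ i) with hP
  have heval : ∀ α : K, P.eval α = polyAction q u α := by
    intro α
    rw [hP, Polynomial.eval_finset_sum]
    unfold polyAction Polynomial.sum
    apply Finset.sum_congr rfl
    intro i _
    simp
  have hPne : P ≠ 0 := by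
    intro h0
    have hcoeff : P.coeff (q ^ d) = 1 := by
      rw [hP, Polynomial.finset_sum_coeff]
      have hmem : d ∈ u.support := by
        rw [Polynomial.mem_support_iff]
        exact hu.coeff_natDegree.symm ▸ one_ne_zero
      rw [Finset.sum_eq_single d]
      · simp [Polynomial.coeff_C_mul, Polynomial.coeff_X_pow, hu.coeff_natDegree]
        exact hu.coeff_natDegree
      · intro i hi hne
        have : q ^ d ≠ q ^ i := fun hEq =>
          hne ((Nat.pow_right_injective hq2 hEq).symm)
        simp [Polynomial.coeff_C_mul, Polynomial.coeff_X_pow, this]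
      · intro hmem'; exact absurd hmem hmem'
    rw [h0] at hcoeff
    simp at hcoeff
  have hdeg : P.natDegree ≤ q ^ d := by
    apply Polynomial.natDegree_sum_le_of_forall_le
    intro i hi
    apply le_trans (Polynomial.natDegree_C_mul_le _ _)
    rw [Polynomial.natDegree_X_pow]
    exact Nat.pow_le_pow_right (by omega) (Polynomial.le_natDegree_of_mem_supp i hi)
  have hsub : {α : K | polyAction q u α = 0} ⊆ ↑P.roots.toFinset := by
    intro α hα
    have : P.IsRoot α := by rw [Polynomial.IsRoot, heval]; exact hα
    simp only [Finset.mem_coe, Multiset.mem_toFinset, Polynomial.mem_roots hPne]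
    exact this
  calc {α : K | polyAction q u α = 0}.ncard ≤ (↑P.roots.toFinset : Set K).ncard :=
        Set.ncard_le_ncard hsub (Set.toFinite _)
    _ = P.roots.toFinset.card := Set.ncard_coe_finset _
    _ ≤ Multiset.card P.roots := Multiset.toFinset_card_le _
    _ ≤ P.natDegree := Polynomial.card_roots' P
    _ ≤ q ^ d := hdeg

end act
end AuxPoly

/-- Lemma 2.7 (second part): for an additive character `χ` with `𝔽_q`-order `h`, the set
`f̂⁻¹(χ) = {ψ ∣ χ = f ∘ ψ}` has `q^k` elements if `h ∣ (xⁿ-1)/f` and is empty otherwise. -/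
theorem stmt14 (q n p e : ℕ) (hp : p.Prime) (he : 0 < e) (hqpe : q = p ^ e) (hn : 0 < n)
    {Fq K : Type} [Field Fq] [Field K] [Algebra Fq K] [Fintype Fq] [Fintype K]
    (hcardFq : Fintype.card Fq = q) (hcardK : Fintype.card K = q ^ n)
    (f : Polynomial Fq) (hfm : f.Monic) (hfd : f ∣ X ^ n - 1)
    (k : ℕ) (hk : f.natDegree = k)
    (χ : AddChar K ℂ) (h : Polynomial Fq)
    -- `h` is the `𝔽_q`-order of `χ`: the monic polynomial of least degree with `h ∘ χ` trivial
    (hhm : h.Monic) (hhχ : ∀ α : K, χ (polyAction q h α) = 1)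
    (hhmin : ∀ h' : Polynomial Fq, h'.Monic → (∀ α : K, χ (polyAction q h' α) = 1) →
      h.degree ≤ h'.degree) :
    (h ∣ (X ^ n - 1 : Polynomial Fq) / f →
      Set.ncard {ψ : AddChar K ℂ | ∀ α : K, χ α = ψ (polyAction q f α)} = q ^ k) ∧
    (¬h ∣ (X ^ n - 1 : Polynomial Fq) / f →
      {ψ : AddChar K ℂ | ∀ α : K, χ α = ψ (polyAction q f α)} = ∅) := by
  classical
  haveI : CharP K p := stmt14_charPK hp he hqpe hn hcardK
  haveI : Fact p.Prime := ⟨hp⟩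
  have hq2 : 2 ≤ q := by rw [hqpe]; exact Nat.one_lt_pow he.ne' hp.one_lt
  have hf0 : f ≠ 0 := hfm.ne_zero
  set g := (X ^ n - 1 : Polynomial Fq) / f with hg
  have hfg : f * g = X ^ n - 1 := EuclideanDomain.mul_div_cancel' hf0 hfd
  have hXm : ((X : Polynomial Fq) ^ n - 1).Monic := by
    have := Polynomial.monic_X_pow_sub_C (1 : Fq) hn.ne'
    simpa using this
  have hgm : g.Monic := hfm.of_mul_monic_left (hfg.symm ▸ hXm)
  have hndeg : ((X : Polynomial Fq) ^ n - 1).natDegree = n := by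
    have := Polynomial.natDegree_X_pow_sub_C (n := n) (r := (1 : Fq))
    simpa using this
  have hkg : k + g.natDegree = n := by
    have h1 := hfm.natDegree_mul hgm
    rw [hfg, hndeg, hk] at h1
    omega
  -- the `𝔽_q`-linear maps given by `f` and `g`
  set L : K →+ K := ⟨⟨polyAction q f, stmt14_polyAction_zero_right hp he hqpe f⟩,
    stmt14_polyAction_add_right hp he hqpe f⟩ with hL
  set M : K →+ K := ⟨⟨polyAction q g, stmt14_polyAction_zero_right hp he hqpe g⟩,
    stmt14_polyAction_add_right hp he hqpe g⟩ with hM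
  have hLapp : ∀ a : K, L a = polyAction q f a := fun _ => rfl
  have hMapp : ∀ a : K, M a = polyAction q g a := fun _ => rfl
  have hLM : ∀ β : K, L (M β) = 0 := by
    intro β
    rw [hLapp, hMapp, ← stmt14_polyAction_mul hp he hqpe hcardFq, hfg,
      stmt14_polyAction_X_pow_sub_one hp he hqpe hn hcardK]
  -- cardinalities
  have hcK : Nat.card K = q ^ n := by rw [Nat.card_eq_fintype_card, hcardK]
  have kerL_set : (L.ker : Set K) = {α : K | polyAction q f α = 0} := by
    ext a
    simp only [SetLike.mem_coe, AddMonoidHom.mem_ker, Set.mem_setOf_eq, hLapp]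
  have kerM_set : (M.ker : Set K) = {α : K | polyAction q g α = 0} := by
    ext a
    simp only [SetLike.mem_coe, AddMonoidHom.mem_ker, Set.mem_setOf_eq, hMapp]
  have hkerL_le : Nat.card L.ker ≤ q ^ k := by
    rw [← SetLike.coe_sort_coe, Nat.card_coe_set_eq, kerL_set, ← hk]
    exact stmt14_ker_bound hq2 f hfm
  have hkerM_le : Nat.card M.ker ≤ q ^ (n - k) := by
    rw [← SetLike.coe_sort_coe, Nat.card_coe_set_eq, kerM_set,
      show n - k = g.natDegree by omega]
    exact stmt14_ker_bound hq2 g hgm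
  have hsplitM : Nat.card M.range * Nat.card M.ker = q ^ n := by
    have h2 := AddSubgroup.card_eq_card_quotient_mul_card_addSubgroup M.ker
    have h3 : Nat.card (K ⧸ M.ker) = Nat.card M.range :=
      Nat.card_congr (QuotientAddGroup.quotientKerEquivRange M).toEquiv
    rw [← h3, ← h2, hcK]
  have hpow : q ^ k * q ^ (n - k) = q ^ n := by
    rw [← pow_add]
    congr 1
    omega
  have hrangeM_ge : q ^ k ≤ Nat.card M.range := by
    have hkerpos : 0 < Nat.card M.ker := Nat.card_pos
    have : q ^ k * Nat.card M.ker ≤ q ^ k * q ^ (n - k) :=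
      Nat.mul_le_mul_left _ hkerM_le
    rw [hpow, ← hsplitM] at this
    exact Nat.le_of_mul_le_mul_right this hkerpos
  have hMleL : M.range ≤ L.ker := by
    rintro a ⟨β, rfl⟩
    exact AddMonoidHom.mem_ker.mpr (hLM β)
  have hkerL_eq : Nat.card L.ker = q ^ k :=
    le_antisymm hkerL_le (le_trans hrangeM_ge (AddSubgroup.card_le_of_le hMleL))
  have hML : M.range = L.ker :=
    AddSubgroup.eq_of_le_of_card_ge hMleL (by rw [hkerL_eq]; exact hrangeM_ge)
  constructor
  · -- counting direction
    intro hdvd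
    obtain ⟨u, hu⟩ := hdvd
    have hχker : ∀ a ∈ L.ker, χ a = 1 := by
      intro a ha
      rw [← hML] at ha
      obtain ⟨β, rfl⟩ := ha
      rw [hMapp, hu, stmt14_polyAction_mul hp he hqpe hcardFq]
      exact hhχ _
    have hkey := stmt14_key L χ hχker
    calc Set.ncard {ψ : AddChar K ℂ | ∀ α : K, χ α = ψ (polyAction q f α)}
        = Nat.card L.ker := hkey
      _ = q ^ k := hkerL_eq
  · -- emptiness direction
    intro hndvd
    rw [Set.eq_empty_iff_forall_notMem]
    intro ψ hψ
    apply hndvd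
    have hψ' : ∀ α : K, χ α = ψ (polyAction q f α) := hψ
    have hgann : ∀ α : K, χ (polyAction q g α) = 1 := by
      intro α
      rw [hψ' (polyAction q g α), ← stmt14_polyAction_mul hp he hqpe hcardFq, hfg,
        stmt14_polyAction_X_pow_sub_one hp he hqpe hn hcardK]
      exact ψ.map_zero_eq_one
    set r := g %ₘ h with hr
    have hsplit : r + h * (g /ₘ h) = g := Polynomial.modByMonic_add_div g h
    have hrann : ∀ α : K, χ (polyAction q r α) = 1 := by
      intro α
      have h1 : χ (polyAction q g α)
          = χ (polyAction q r α) * χ (polyAction q (h * (g /ₘ h)) α) := by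
        conv_lhs => rw [← hsplit]
        rw [stmt14_polyAction_add_left, AddChar.map_add_eq_mul]
      have h2 : χ (polyAction q (h * (g /ₘ h)) α) = 1 := by
        rw [stmt14_polyAction_mul hp he hqpe hcardFq]
        exact hhχ _
      have h3 := hgann α
      rw [h1, h2, mul_one] at h3
      exact h3
    have hr0 : r = 0 := by
      by_contra hrne
      have hmon : (r * C r.leadingCoeff⁻¹).Monic := Polynomial.monic_mul_leadingCoeff_inv hrne
      have hann' : ∀ α : K, χ (polyAction q (r * C r.leadingCoeff⁻¹) α) = 1 := by
        intro α
        rw [stmt14_polyAction_mul hp he hqpe hcardFq]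
        exact hrann _
      have hle := hhmin _ hmon hann'
      have hdeglt : r.degree < h.degree := Polynomial.degree_modByMonic_lt g hhm
      have hdeq : (r * C r.leadingCoeff⁻¹).degree = r.degree := by
        rw [Polynomial.degree_mul,
          Polynomial.degree_C (inv_ne_zero (Polynomial.leadingCoeff_ne_zero.mpr hrne)), add_zero]
      rw [hdeq] at hle
      exact absurd (lt_of_le_of_lt hle hdeglt) (lt_irrefl _)
    refine ⟨g /ₘ h, ?_⟩
    conv_lhs => rw [← hsplit]
    rw [hr0, zero_add]
end

section
/- Let q be an odd prime power, n a positive integer, p the greatest prime divisor of n, and write n = p^a·n0 with gcd(p, n0) = 1. Set p̄ = 2p^a if p is odd, and p̄ = 2^a if p = 2. If 𝔭 is a prime number dividing q^n − 1 but not dividing q^{n/p} − 1, then 𝔭 ≡ 1 (mod p̄), i.e., 𝔭 is of the form p̄·j + 1 for some nonnegative integer j. -/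
/-- If `q` is an odd prime power, `p` is the greatest prime divisor of `n`, `n = pᵃ·n₀` with
`gcd(p, n₀) = 1`, and `P` is a prime dividing `qⁿ - 1` but not `q^(n/p) - 1`, then
`P ≡ 1 (mod p̄)` where `p̄ = 2pᵃ` if `p` is odd and `p̄ = 2ᵃ` if `p = 2`. -/
theorem stmt18 (q p0 e : ℕ) (hp0 : p0.Prime) (he : 0 < e) (hqpe : q = p0 ^ e) (hodd : Odd q)
    (n : ℕ) (hn : 0 < n) (p a n0 : ℕ) (hp : p.Prime) (hpn : p ∣ n)
    (hgreatest : ∀ r : ℕ, r.Prime → r ∣ n → r ≤ p)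
    (ha : 1 ≤ a) (hfact : n = p ^ a * n0) (hcop : Nat.gcd p n0 = 1)
    (P : ℕ) (hP : P.Prime) (hdvd : P ∣ q ^ n - 1) (hndvd : ¬P ∣ q ^ (n / p) - 1) :
    P % (if p = 2 then 2 ^ a else 2 * p ^ a) = 1 := by
  have hq2 : 2 ≤ q := by
    subst hqpe
    calc 2 ≤ p0 := hp0.two_le
    _ ≤ p0 ^ e := Nat.le_self_pow he.ne' p0
  haveI : Fact P.Prime := ⟨hP⟩
  have key : ∀ k : ℕ, (P ∣ q ^ k - 1 ↔ (q : ZMod P) ^ k = 1) := by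
    intro k
    have h1 : 1 ≤ q ^ k := Nat.one_le_pow _ _ (by omega)
    rw [← ZMod.natCast_eq_zero_iff, Nat.cast_sub h1]
    push_cast
    rw [sub_eq_zero]
  -- P ≠ 2
  have hnp0 : 0 < n / p := Nat.div_pos (Nat.le_of_dvd hn hpn) hp.pos
  have hP2 : P ≠ 2 := by
    intro h2
    apply hndvd
    rw [h2]
    obtain ⟨m, hm⟩ := hodd.pow (n := n / p)
    have h1 : 1 ≤ q ^ (n / p) := Nat.one_le_pow _ _ (by omega)
    omega
  have hqne : (q : ZMod P) ≠ 0 := by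
    intro h0
    have := (key n).mp hdvd
    rw [h0, zero_pow hn.ne'] at this
    exact zero_ne_one this
  set d := orderOf (q : ZMod P) with hd
  have hdn : d ∣ n := orderOf_dvd_of_pow_eq_one ((key n).mp hdvd)
  have hdnp : ¬ d ∣ n / p := fun h => hndvd ((key _).mpr (orderOf_dvd_iff_pow_eq_one.mp h))
  have hnp : n / p = p ^ (a - 1) * n0 := by
    rw [hfact]
    rw [show p ^ a = p * p ^ (a-1) by rw [← pow_succ']; congr 1; omega]
    rw [mul_assoc, Nat.mul_div_cancel_left _ hp.pos]
  have hpad : p ^ a ∣ d := by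
    rw [hfact] at hdn
    obtain ⟨d1, d2, hd1, hd2, hdeq⟩ := exists_dvd_and_dvd_of_dvd_mul hdn
    obtain ⟨b, hb, rfl⟩ := (Nat.dvd_prime_pow hp).mp hd1
    rcases Nat.lt_or_ge b a with hba | hba
    · exfalso
      apply hdnp
      rw [hnp, hdeq]
      exact mul_dvd_mul (pow_dvd_pow p (by omega)) hd2
    · have : a = b := le_antisymm hba hb
      subst this
      exact hdeq ▸ Dvd.intro _ rfl
  have hdP : d ∣ P - 1 := ZMod.orderOf_dvd_card_sub_one hqne
  have hpaP : p ^ a ∣ P - 1 := hpad.trans hdP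
  have hP3 : 3 ≤ P := by
    have := hP.two_le
    omega
  by_cases hpeq : p = 2
  · simp only [hpeq, if_pos]
    subst hpeq
    obtain ⟨j, hj⟩ := hpaP
    have hm : 1 < 2 ^ a := Nat.one_lt_two_pow (by omega)
    have : P = 1 + 2 ^ a * j := by omega
    rw [this, Nat.add_mul_mod_self_left, Nat.mod_eq_of_lt hm]
  · simp only [hpeq, if_neg, ite_false]
    have hpodd : ¬ 2 ∣ p := fun h => hpeq ((Nat.prime_dvd_prime_iff_eq Nat.prime_two hp).mp h).symm
    have h2P : 2 ∣ P - 1 := by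
      obtain ⟨m, hm⟩ := hP.odd_of_ne_two hP2
      omega
    have hcop2 : Nat.Coprime 2 (p ^ a) := (Nat.coprime_primes Nat.prime_two hp).mpr (fun h => hpeq h.symm) |>.pow_right a
    have hmul : 2 * p ^ a ∣ P - 1 := Nat.Coprime.mul_dvd_of_dvd_of_dvd hcop2 h2P hpaP
    obtain ⟨j, hj⟩ := hmul
    have hm : 1 < 2 * p ^ a := by
      have : 1 ≤ p ^ a := Nat.one_le_pow _ _ hp.pos
      omega
    have : P = 1 + 2 * p ^ a * j := by omega
    rw [this, Nat.add_mul_mod_self_left, Nat.mod_eq_of_lt hm]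
end
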